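/- For (a,b,c) ∈ ℂ³ let f_{(a,b,c)}(x,y,z) = 3a(b²−c²)·x²yz + 3b(c²−a²)·xy²z + 3c(a²−b²)·xyz² + a³·yz(y²−z²) − b³·xz(x²−z²) + c³·xy(x²−y²) be the unexpected quartic of the B₃ configuration. Then the unexpected quartic at a general point is irreducible: there exists a nonzero polynomial h ∈ ℂ[a,b,c] such that for all (a,b,c) ∈ ℂ³ with h(a,b,c) ≠ 0, the polynomial f_{(a,b,c)} is irreducible in ℂ[x,y,z]. -/

import Mathlib

/-!
The quartic `f = unexpQuartic a b c` has a triple point at `(a : b : c)`. After a linear change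
of coordinates moving that point to `(1 : 0 : 0)`, `f` becomes `X₀ · P(X₁, X₂) + Q(X₁, X₂)` with
`P` a cubic (the tangent cone) and `Q = a³ X₁ X₂ (X₁ - X₂)(X₁ + X₂)`. A polynomial of degree one
in `X₀` over the UFD `ℂ[X₁, X₂]` is irreducible as soon as its two coefficients are coprime, and
`P` shares no factor with `Q` because it vanishes at none of the four points `(0 : 1)`, `(1 : 0)`,
`(1 : 1)`, `(1 : -1)`. Together with `a ≠ 0`, these non-vanishing conditions say that a fixed
product of linear and quadratic forms in `(a, b, c)` does not vanish.
-/

open MvPolynomial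

/-- The unexpected quartic of the B₃ configuration associated to (a,b,c). -/
noncomputable def unexpQuartic (a b c : ℂ) : MvPolynomial (Fin 3) ℂ :=
  C (3 * a * (b ^ 2 - c ^ 2)) * (X 0 ^ 2 * X 1 * X 2)
  + C (3 * b * (c ^ 2 - a ^ 2)) * (X 0 * X 1 ^ 2 * X 2)
  + C (3 * c * (a ^ 2 - b ^ 2)) * (X 0 * X 1 * X 2 ^ 2)
  + C (a ^ 3) * (X 1 * X 2 * (X 1 ^ 2 - X 2 ^ 2))
  - C (b ^ 3) * (X 0 * X 2 * (X 0 ^ 2 - X 2 ^ 2))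
  + C (c ^ 3) * (X 0 * X 1 * (X 0 ^ 2 - X 1 ^ 2))

namespace MvPolynomial

variable {K : Type*} [Field K] {n : ℕ}

/- Pullback along the linear map sending `e₀` to `v` and fixing `e₁, …, eₙ`: it moves the point
`v` of a hypersurface to `(1 : 0 : … : 0)`. -/
noncomputable def coordChangeEquiv (v : Fin (n + 1) → K) (hv : v 0 ≠ 0) :
    MvPolynomial (Fin (n + 1)) K ≃ₐ[K] MvPolynomial (Fin (n + 1)) K :=
  AlgEquiv.ofAlgHom (aeval (Fin.cons (C (v 0) * X 0) fun i ↦ C (v i.succ) * X 0 + X i.succ))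
    (aeval (Fin.cons (C (v 0)⁻¹ * X 0) fun i ↦ X i.succ - C (v i.succ / v 0) * X 0))
    (algHom_ext fun i ↦ Fin.cases (by simp [← mul_assoc, ← C_mul, hv])
      (fun i ↦ by simp [← mul_assoc, ← C_mul, hv]) i)
    (algHom_ext fun i ↦ Fin.cases (by simp [← mul_assoc, ← C_mul, hv])
      (fun i ↦ by simp [div_eq_mul_inv, C_mul]; ring) i)

variable (v : Fin (n + 1) → K) (hv : v 0 ≠ 0)

@[simp]
theorem coordChangeEquiv_C (r : K) : coordChangeEquiv v hv (C r) = C r :=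
  (coordChangeEquiv v hv).commutes r

@[simp]
theorem coordChangeEquiv_X_zero : coordChangeEquiv v hv (X 0) = C (v 0) * X 0 :=
  aeval_X _ _

@[simp]
theorem coordChangeEquiv_X_succ (i : Fin n) :
    coordChangeEquiv v hv (X i.succ) = C (v i.succ) * X 0 + X i.succ :=
  aeval_X _ _

theorem prime_X_zero_add_C_mul_X_one {R : Type*} [CommRing R] [IsDomain R] (c : R) :
    Prime (X 0 + C c * X 1 : MvPolynomial (Fin 2) R) := by
  have hX1 : finSuccEquiv R 1 (X 1) = Polynomial.C (X 0) := by
    simpa using finSuccEquiv_X_succ (R := R) (n := 1) (j := 0)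
  have hC : finSuccEquiv R 1 (C c) = Polynomial.C (C c) := (finSuccEquiv R 1).commutes c
  have h : finSuccEquiv R 1 (X 0 + C c * X 1) = Polynomial.X - Polynomial.C (-(C c * X 0)) := by
    rw [map_add, map_mul, finSuccEquiv_X_zero, hX1, hC]
    simp
  exact (MulEquiv.prime_iff (finSuccEquiv R 1)).mp (h ▸ Polynomial.prime_X_sub_C _)

theorem isRelPrime_of_eval_eq_zero {σ R : Type*} [CommSemiring R] {p ℓ : MvPolynomial σ R}
    (hℓ : Irreducible ℓ) (v : σ → R) (hℓv : eval v ℓ = 0) (hpv : eval v p ≠ 0) :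
    IsRelPrime p ℓ :=
  (hℓ.isRelPrime_iff_not_dvd.mpr fun ⟨t, ht⟩ ↦ hpv (by rw [ht, map_mul, hℓv, zero_mul])).symm

end MvPolynomial

namespace unexpQuartic

variable (a b c : ℂ)

/- In the coordinates of `coordChangeEquiv ![a, b, c]`, `unexpQuartic a b c` is
`X₀ * tangentCubic + quarticPart`; `finSuccEquiv` renumbers `X₁, X₂` as `X 0, X 1`. -/
noncomputable def tangentCubic : MvPolynomial (Fin 2) ℂ :=
  C (a ^ 3 * c - a * c ^ 3) * X 0 ^ 3 + C (3 * a * b * c ^ 2) * (X 0 ^ 2 * X 1)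
    - C (3 * a * b ^ 2 * c) * (X 0 * X 1 ^ 2) + C (a * b ^ 3 - a ^ 3 * b) * X 1 ^ 3

noncomputable def quarticPart : MvPolynomial (Fin 2) ℂ :=
  C (a ^ 3) * (X 0 * X 1 * (X 0 - X 1) * (X 0 + X 1))

theorem finSuccEquiv_coordChangeEquiv (ha : a ≠ 0) :
    finSuccEquiv ℂ 2 (coordChangeEquiv ![a, b, c] ha (unexpQuartic a b c)) =
      Polynomial.C (tangentCubic a b c) * Polynomial.X + Polynomial.C (quarticPart a) := by
  have hX1 := coordChangeEquiv_X_succ ![a, b, c] ha 0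
  have hX2 := coordChangeEquiv_X_succ ![a, b, c] ha 1
  have hY1 := finSuccEquiv_X_succ (R := ℂ) (n := 2) (j := 0)
  have hY2 := finSuccEquiv_X_succ (R := ℂ) (n := 2) (j := 1)
  have hC (r : ℂ) : finSuccEquiv ℂ 2 (C r) = Polynomial.C (C r) := (finSuccEquiv ℂ 2).commutes r
  simp only [Fin.succ_zero_eq_one, Fin.succ_one_eq_two, Matrix.cons_val_zero, Matrix.cons_val_one,
    Matrix.cons_val_two, Matrix.head_cons, Matrix.tail_cons] at hX1 hX2 hY1 hY2
  simp only [unexpQuartic, tangentCubic, quarticPart, map_add, map_sub, map_mul, map_pow,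
    coordChangeEquiv_C ![a, b, c] ha, coordChangeEquiv_X_zero ![a, b, c] ha, hX1, hX2,
    finSuccEquiv_X_zero, hY1, hY2, hC, Matrix.cons_val_zero, map_ofNat]
  ring

@[simp]
theorem eval_tangentCubic (s t : ℂ) :
    eval ![s, t] (tangentCubic a b c) = (a ^ 3 * c - a * c ^ 3) * s ^ 3 + 3 * a * b * c ^ 2 * s ^ 2 * t
      - 3 * a * b ^ 2 * c * s * t ^ 2 + (a * b ^ 3 - a ^ 3 * b) * t ^ 3 := by
  simp [tangentCubic]
  ring

variable {a b c}

theorem tangentCubic_ne_zero (ha : a ≠ 0) (hc : c ≠ 0) (hca : c ^ 2 - a ^ 2 ≠ 0) :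
    tangentCubic a b c ≠ 0 := fun h ↦ by
  have h₁₀ := congrArg (eval ![1, 0]) h
  simp only [eval_tangentCubic, map_zero] at h₁₀
  exact mul_ne_zero (mul_ne_zero ha hc) hca (by linear_combination -h₁₀)

theorem isRelPrime_tangentCubic_quarticPart (ha : a ≠ 0) (hb : b ≠ 0) (hc : c ≠ 0)
    (hab : a ^ 2 - b ^ 2 ≠ 0) (hbc : b ^ 2 - c ^ 2 ≠ 0) (hca : c ^ 2 - a ^ 2 ≠ 0)
    (h₁ : a + b + c ≠ 0) (h₂ : a + b - c ≠ 0) (h₃ : a - b + c ≠ 0) (h₄ : a - b - c ≠ 0) :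
    IsRelPrime (tangentCubic a b c) (quarticPart a) := by
  have hX0 := (X_prime (R := ℂ) (i := (0 : Fin 2))).irreducible
  have hX1 := (X_prime (R := ℂ) (i := (1 : Fin 2))).irreducible
  have hsub : Irreducible (X 0 - X 1 : MvPolynomial (Fin 2) ℂ) := by
    simpa [← sub_eq_add_neg] using (prime_X_zero_add_C_mul_X_one (-1 : ℂ)).irreducible
  have hadd : Irreducible (X 0 + X 1 : MvPolynomial (Fin 2) ℂ) := by
    simpa using (prime_X_zero_add_C_mul_X_one (1 : ℂ)).irreducible
  have hbc' : (b + c) * (b - c) ≠ 0 := by rwa [← sq_sub_sq]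
  rw [quarticPart, isRelPrime_mul_unit_left_right ((Ne.isUnit (pow_ne_zero 3 ha)).map C)]
  refine (((isRelPrime_of_eval_eq_zero hX0 ![0, 1] (by simp) ?_).mul_right
    (isRelPrime_of_eval_eq_zero hX1 ![1, 0] (by simp) ?_)).mul_right
    (isRelPrime_of_eval_eq_zero hsub ![1, 1] (by simp) ?_)).mul_right
    (isRelPrime_of_eval_eq_zero hadd ![1, -1] (by simp) ?_)
  · have h : eval ![0, 1] (tangentCubic a b c) = -(a * b * (a ^ 2 - b ^ 2)) := by simp; ring
    rw [h]
    exact neg_ne_zero.mpr (mul_ne_zero (mul_ne_zero ha hb) hab)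
  · have h : eval ![1, 0] (tangentCubic a b c) = -(a * c * (c ^ 2 - a ^ 2)) := by simp; ring
    rw [h]
    exact neg_ne_zero.mpr (mul_ne_zero (mul_ne_zero ha hc) hca)
  · have h : eval ![1, 1] (tangentCubic a b c) = -(a * (b - c) * (a - b + c) * (a + b - c)) := by
      simp; ring
    rw [h]
    exact neg_ne_zero.mpr
      (mul_ne_zero (mul_ne_zero (mul_ne_zero ha (right_ne_zero_of_mul hbc')) h₃) h₂)
  · have h : eval ![1, -1] (tangentCubic a b c) = a * (b + c) * (a + b + c) * (a - b - c) := by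
      simp; ring
    rw [h]
    exact mul_ne_zero (mul_ne_zero (mul_ne_zero ha (left_ne_zero_of_mul hbc')) h₁) h₄

end unexpQuartic

open unexpQuartic in
theorem irreducible_unexpQuartic {a b c : ℂ} (ha : a ≠ 0) (hb : b ≠ 0) (hc : c ≠ 0)
    (hab : a ^ 2 - b ^ 2 ≠ 0) (hbc : b ^ 2 - c ^ 2 ≠ 0) (hca : c ^ 2 - a ^ 2 ≠ 0)
    (h₁ : a + b + c ≠ 0) (h₂ : a + b - c ≠ 0) (h₃ : a - b + c ≠ 0) (h₄ : a - b - c ≠ 0) :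
    Irreducible (unexpQuartic a b c) := by
  have hlin := Polynomial.irreducible_C_mul_X_add_C (tangentCubic_ne_zero ha hc hca)
    (isRelPrime_tangentCubic_quarticPart ha hb hc hab hbc hca h₁ h₂ h₃ h₄)
  rwa [← finSuccEquiv_coordChangeEquiv a b c ha, MulEquiv.irreducible_iff,
    MulEquiv.irreducible_iff] at hlin

/-- The unexpected quartic of the B₃ configuration at a general point (a:b:c)
is irreducible: there is a nonzero polynomial h in a, b, c such that whenever
h(a,b,c) ≠ 0, the quartic f_{(a,b,c)} is irreducible in ℂ[x,y,z]. -/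
theorem unexpected_quartic_irreducible :
    ∃ h : MvPolynomial (Fin 3) ℂ, h ≠ 0 ∧
      ∀ a b c : ℂ, eval ![a, b, c] h ≠ 0 → Irreducible (unexpQuartic a b c) := by
  refine ⟨X 0 * X 1 * X 2 * (X 0 ^ 2 - X 1 ^ 2) * (X 1 ^ 2 - X 2 ^ 2) * (X 2 ^ 2 - X 0 ^ 2)
    * (X 0 + X 1 + X 2) * (X 0 + X 1 - X 2) * (X 0 - X 1 + X 2) * (X 0 - X 1 - X 2), ?_, ?_⟩
  · intro h
    have h124 := congrArg (eval ![(1 : ℂ), 2, 4]) h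
    simp at h124
    norm_num at h124
  · intro a b c hh
    simp only [map_mul, map_add, map_sub, map_pow, eval_X, Matrix.cons_val_zero,
      Matrix.cons_val_one, Matrix.cons_val_two, Matrix.head_cons, Matrix.tail_cons,
      mul_ne_zero_iff] at hh
    obtain ⟨⟨⟨⟨⟨⟨⟨⟨⟨ha, hb⟩, hc⟩, hab⟩, hbc⟩, hca⟩, h₁⟩, h₂⟩, h₃⟩, h₄⟩ := hh
    exact irreducible_unexpQuartic ha hb hc hab hbc hca h₁ h₂ h₃ h₄
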